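/- arXiv:2311.00531 — 2 statements merged into one kernel-verified Lean document; each statement's English description precedes it below -/
import Mathlib

section
/- If f : ℝ^d → ℝ is L-smooth, then for any 0 ≤ σ ≤ τ and any x, |f_τ(x) − f_σ(x)| ≤ (L d / 4)(τ² − σ²). -/
open MeasureTheory Real

noncomputable def gsmooth {d : ℕ} (f : EuclideanSpace ℝ (Fin d) → ℝ) (σ : ℝ)
    (x : EuclideanSpace ℝ (Fin d)) : ℝ :=
  Real.pi ^ (-(d : ℝ) / 2) *
    ∫ u : EuclideanSpace ℝ (Fin d), f (x + σ • u) * Real.exp (-‖u‖ ^ 2)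

def LSmooth {d : ℕ} (f : EuclideanSpace ℝ (Fin d) → ℝ) (L : ℝ) : Prop :=
  ∀ x y : EuclideanSpace ℝ (Fin d),
    |f y - f x - inner ℝ (gradient f x) (y - x)| ≤ L / 2 * ‖y - x‖ ^ 2

section GsmoothAux

/-! ### 1D Gaussian facts -/

lemma integral_sq_exp_neg_sq : ∫ x : ℝ, x ^ 2 * rexp (-x ^ 2) = Real.sqrt π / 2 := by
  have hderiv : ∀ x : ℝ, HasDerivAt (fun x : ℝ => -(x / 2) * rexp (-x ^ 2))
      (x ^ 2 * rexp (-x ^ 2) - 1 / 2 * rexp (-x ^ 2)) x := by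
    intro x
    have h1 : HasDerivAt (fun x : ℝ => -x ^ 2) (-(2 * x)) x := by
      simpa using (hasDerivAt_pow 2 x).fun_neg
    have h3 : HasDerivAt (fun x : ℝ => -(x / 2)) (-(1 / 2)) x := by
      simpa using ((hasDerivAt_id x).div_const 2).fun_neg
    have := h3.fun_mul h1.exp
    refine this.congr_deriv ?_
    ring
  have hint1 : Integrable (fun x : ℝ => x ^ 2 * rexp (-x ^ 2)) := by
    have := integrable_rpow_mul_exp_neg_mul_sq (b := 1) one_pos (s := 2) (by norm_num)
    simpa [Real.rpow_natCast] using this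
  have hint2 : Integrable (fun x : ℝ => 1 / 2 * rexp (-x ^ 2)) := by
    have := integrable_exp_neg_mul_sq (b := 1) one_pos
    simpa using this.const_mul (1 / 2)
  have hintg : Integrable (fun x : ℝ => -(x / 2) * rexp (-x ^ 2)) := by
    have := integrable_mul_exp_neg_mul_sq (b := 1) one_pos
    have h2 := this.const_mul (-(1 / 2))
    refine h2.congr (Filter.Eventually.of_forall fun x => ?_)
    simp; ring
  have h0 := integral_eq_zero_of_hasDerivAt_of_integrable hderiv (hint1.sub hint2) hintg
  rw [integral_sub hint1 hint2] at h0
  have h1 : ∫ x : ℝ, 1 / 2 * rexp (-x ^ 2) = Real.sqrt π / 2 := by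
    rw [MeasureTheory.integral_const_mul]
    have := integral_gaussian 1
    simp only [neg_one_mul] at this
    rw [this]
    simp; ring
  rw [h1] at h0
  linarith

/-! ### Euclidean Gaussian facts -/

lemma normsq_eq_sum {ι : Type*} [Fintype ι] (u : EuclideanSpace ℝ ι) :
    ‖u‖ ^ 2 = ∑ i, u i ^ 2 := by
  rw [EuclideanSpace.norm_eq, Real.sq_sqrt (by positivity)]
  simp [sq_abs]

lemma integrable_gauss {ι : Type*} [Fintype ι] {b : ℝ} (hb : 0 < b) :
    Integrable (fun u : EuclideanSpace ℝ ι => rexp (-b * ‖u‖ ^ 2)) := by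
  have h := GaussianFourier.integrable_cexp_neg_mul_sq_norm_add
    (V := EuclideanSpace ℝ ι) (b := (b : ℂ)) (by simpa using hb) 0 (0 : EuclideanSpace ℝ ι)
  have h2 := h.re
  refine h2.congr (Filter.Eventually.of_forall fun v => ?_)
  have : (-(b : ℂ) * (‖v‖ : ℂ) ^ 2 + 0 * ((inner ℝ (0 : EuclideanSpace ℝ ι) v : ℝ) : ℂ))
      = ((-b * ‖v‖ ^ 2 : ℝ) : ℂ) := by push_cast; ring
  simp only [this]
  exact Complex.exp_ofReal_re _

lemma integrable_gauss' {ι : Type*} [Fintype ι] :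
    Integrable (fun u : EuclideanSpace ℝ ι => rexp (-‖u‖ ^ 2)) := by
  have := integrable_gauss (ι := ι) one_pos
  simpa using this

lemma integral_gauss {ι : Type*} [Fintype ι] :
    ∫ u : EuclideanSpace ℝ ι, rexp (-‖u‖ ^ 2) = π ^ ((Fintype.card ι : ℝ) / 2) := by
  have := GaussianFourier.integral_rexp_neg_mul_sq_norm (V := EuclideanSpace ℝ ι) one_pos
  simpa [finrank_euclideanSpace] using this

lemma integrable_normsq_gauss {ι : Type*} [Fintype ι] :
    Integrable (fun u : EuclideanSpace ℝ ι => ‖u‖ ^ 2 * rexp (-‖u‖ ^ 2)) := by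
  refine Integrable.mono' ((integrable_gauss (ι := ι) (b := (1:ℝ)/2) (by norm_num)).const_mul 2)
    ?_ (Filter.Eventually.of_forall fun u => ?_)
  · exact (Continuous.mul (by continuity) (by continuity)).aestronglyMeasurable
  · have ht : ‖u‖ ^ 2 ≤ 2 * rexp (‖u‖ ^ 2 / 2) := by
      have := Real.add_one_le_exp (‖u‖ ^ 2 / 2)
      nlinarith [Real.exp_pos (‖u‖ ^ 2 / 2), norm_nonneg u, sq_nonneg ‖u‖]
    have h0 : (0:ℝ) ≤ ‖u‖ ^ 2 * rexp (-‖u‖ ^ 2) := by positivity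
    rw [Real.norm_eq_abs, abs_of_nonneg h0]
    calc ‖u‖ ^ 2 * rexp (-‖u‖ ^ 2) ≤ (2 * rexp (‖u‖ ^ 2 / 2)) * rexp (-‖u‖ ^ 2) :=
          mul_le_mul_of_nonneg_right ht (Real.exp_pos _).le
      _ = 2 * rexp (-(1/2) * ‖u‖ ^ 2) := by rw [mul_assoc, ← Real.exp_add]; ring_nf

lemma integral_normsq_gauss {d : ℕ} :
    ∫ u : EuclideanSpace ℝ (Fin d), ‖u‖ ^ 2 * rexp (-‖u‖ ^ 2)
      = ((d : ℝ) / 2) * π ^ ((d : ℝ) / 2) := by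
  have hmp := EuclideanSpace.volume_preserving_symm_measurableEquiv_toLp (Fin d)
  have hemb := ((MeasurableEquiv.toLp 2 (Fin d → ℝ)).symm).measurableEmbedding
  set G : (Fin d → ℝ) → ℝ := fun y => ∑ i, ((∏ j, (if j = i then (y j) ^ 2 else 1))
      * ∏ j, rexp (-(y j) ^ 2)) with hG
  have hcomp : ∀ u : EuclideanSpace ℝ (Fin d),
      ‖u‖ ^ 2 * rexp (-‖u‖ ^ 2) = G ((MeasurableEquiv.toLp 2 (Fin d → ℝ)).symm u) := by
    intro u
    have happ : ∀ i, ((MeasurableEquiv.toLp 2 (Fin d → ℝ)).symm u) i = u i := fun i => rfl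
    simp only [hG, happ, Finset.prod_ite_eq', Finset.mem_univ, if_true, ← Real.exp_sum,
      ← Finset.sum_neg_distrib]
    rw [normsq_eq_sum u, Finset.sum_mul]
    simp [Finset.sum_neg_distrib]
  have hsqrtd : Real.sqrt π ^ d = π ^ ((d : ℝ) / 2) := by
    rw [Real.sqrt_eq_rpow, ← Real.rpow_natCast (π ^ ((1:ℝ)/2)) d, ← Real.rpow_mul pi_nonneg]
    ring_nf
  have hint1d : Integrable (fun t : ℝ => t ^ 2 * rexp (-t ^ 2)) := by
    have := integrable_rpow_mul_exp_neg_mul_sq (b := 1) one_pos (s := 2) (by norm_num)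
    simpa [Real.rpow_natCast] using this
  have hintexp : Integrable (fun t : ℝ => rexp (-t ^ 2)) := by
    simpa using integrable_exp_neg_mul_sq (b := 1) one_pos
  have hmoment : ∫ t : ℝ, t ^ 2 * rexp (-t ^ 2) = Real.sqrt π / 2 := integral_sq_exp_neg_sq
  have hgauss1 : ∫ t : ℝ, rexp (-t ^ 2) = Real.sqrt π := by
    have := integral_gaussian 1
    simpa using this
  have hintterm : ∀ i : Fin d, Integrable (fun y : Fin d → ℝ =>
      ∏ j, ((if j = i then (y j) ^ 2 else 1) * rexp (-(y j) ^ 2))) := by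
    intro i
    apply Integrable.fintype_prod (f := fun j (t : ℝ) => (if j = i then t ^ 2 else 1) * rexp (-t ^ 2))
    intro j
    by_cases h : j = i <;> simp [h, hint1d, hintexp]
  have hGform : ∀ y : Fin d → ℝ, G y = ∑ i, ∏ j,
      ((if j = i then (y j) ^ 2 else 1) * rexp (-(y j) ^ 2)) := by
    intro y
    simp only [hG, ← Finset.prod_mul_distrib]
  calc ∫ u : EuclideanSpace ℝ (Fin d), ‖u‖ ^ 2 * rexp (-‖u‖ ^ 2)
      = ∫ u : EuclideanSpace ℝ (Fin d), G ((MeasurableEquiv.toLp 2 (Fin d → ℝ)).symm u) :=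
        integral_congr_ae (Filter.Eventually.of_forall hcomp)
    _ = ∫ y : Fin d → ℝ, G y := hmp.integral_comp hemb G
    _ = ∑ i : Fin d, ∫ y : Fin d → ℝ, ∏ j,
          ((if j = i then (y j) ^ 2 else 1) * rexp (-(y j) ^ 2)) := by
        rw [integral_congr_ae (Filter.Eventually.of_forall hGform)]
        exact integral_finset_sum _ fun i _ => hintterm i
    _ = ∑ i : Fin d, ∏ j : Fin d,
          ∫ t : ℝ, ((if j = i then t ^ 2 else 1) * rexp (-t ^ 2)) := by
        congr 1 with i
        exact integral_fintype_prod_eq_prod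
          (f := fun j (t : ℝ) => (if j = i then t ^ 2 else 1) * rexp (-t ^ 2))
    _ = ∑ i : Fin d, ∏ j : Fin d, (Real.sqrt π * if j = i then (1:ℝ)/2 else 1) := by
        congr 1 with i
        congr 1 with j
        by_cases h : j = i <;> simp [h, hmoment, hgauss1] <;> ring
    _ = ((d : ℝ) / 2) * π ^ ((d : ℝ) / 2) := by
        simp only [Finset.prod_mul_distrib, Finset.prod_const, Finset.prod_ite_eq',
          Finset.mem_univ, if_true, Finset.sum_const, Finset.card_univ, Fintype.card_fin,
          nsmul_eq_mul, hsqrtd]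
        ring

/-! ### rotation machinery -/

variable {d : ℕ}

def rotFun (d : ℕ) (c s' : ℝ) (w : EuclideanSpace ℝ (Fin d ⊕ Fin d)) :
    EuclideanSpace ℝ (Fin d ⊕ Fin d) :=
  WithLp.toLp 2 (fun j => Sum.elim (fun i => c * w (.inl i) + s' * w (.inr i))
                    (fun i => s' * w (.inl i) - c * w (.inr i)) j)

lemma rotFun_invol {c s' : ℝ} (h : c ^ 2 + s' ^ 2 = 1) :
    Function.Involutive (rotFun d c s') := by
  intro w
  ext j
  cases j with
  | inl i => show c * (rotFun d c s' w) (.inl i) + s' * (rotFun d c s' w) (.inr i) = _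
             simp only [rotFun, Sum.elim_inl, Sum.elim_inr]
             linear_combination (w (.inl i)) * h
  | inr i => show s' * (rotFun d c s' w) (.inl i) - c * (rotFun d c s' w) (.inr i) = _
             simp only [rotFun, Sum.elim_inl, Sum.elim_inr]
             linear_combination (w (.inr i)) * h

lemma rotFun_norm {c s' : ℝ} (h : c ^ 2 + s' ^ 2 = 1)
    (w : EuclideanSpace ℝ (Fin d ⊕ Fin d)) : ‖rotFun d c s' w‖ = ‖w‖ := by
  have h2 : ‖rotFun d c s' w‖ ^ 2 = ‖w‖ ^ 2 := by
    rw [normsq_eq_sum, normsq_eq_sum, Fintype.sum_sum_type, Fintype.sum_sum_type,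
      ← Finset.sum_add_distrib, ← Finset.sum_add_distrib]
    refine Finset.sum_congr rfl fun i _ => ?_
    show (c * w (.inl i) + s' * w (.inr i)) ^ 2 + (s' * w (.inl i) - c * w (.inr i)) ^ 2 = _
    linear_combination (w (.inl i) ^ 2 + w (.inr i) ^ 2) * h
  have := congrArg Real.sqrt h2
  rwa [Real.sqrt_sq (norm_nonneg _), Real.sqrt_sq (norm_nonneg _)] at this

noncomputable def rotLIE (d : ℕ) {c s' : ℝ} (h : c ^ 2 + s' ^ 2 = 1) :
    EuclideanSpace ℝ (Fin d ⊕ Fin d) ≃ₗᵢ[ℝ] EuclideanSpace ℝ (Fin d ⊕ Fin d) :=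
  { toFun := rotFun d c s'
    invFun := rotFun d c s'
    left_inv := rotFun_invol h
    right_inv := rotFun_invol h
    map_add' := by
      intro w w'
      ext j
      cases j <;> simp [rotFun, PiLp.add_apply] <;> ring
    map_smul' := by
      intro r w
      ext j
      cases j <;> simp [rotFun, PiLp.smul_apply, smul_eq_mul] <;> ring
    norm_map' := rotFun_norm h }

noncomputable def splitEquiv (d : ℕ) :
    EuclideanSpace ℝ (Fin d ⊕ Fin d) ≃ᵐ
      (EuclideanSpace ℝ (Fin d) × EuclideanSpace ℝ (Fin d)) :=
  ((MeasurableEquiv.toLp 2 (Fin d ⊕ Fin d → ℝ)).symm).trans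
    ((MeasurableEquiv.sumPiEquivProdPi (fun _ : Fin d ⊕ Fin d => ℝ)).trans
      ((((MeasurableEquiv.toLp 2 (Fin d → ℝ)).symm).symm).prodCongr
        (((MeasurableEquiv.toLp 2 (Fin d → ℝ)).symm).symm)))

lemma splitEquiv_mp : MeasurePreserving (splitEquiv d) volume volume := by
  have h1 := EuclideanSpace.volume_preserving_symm_measurableEquiv_toLp (Fin d ⊕ Fin d)
  have h2 := (MeasureTheory.volume_measurePreserving_sumPiEquivProdPi_symm
      (fun _ : Fin d ⊕ Fin d => ℝ)).symm
  rw [MeasurableEquiv.symm_symm] at h2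
  have h3 := ((EuclideanSpace.volume_preserving_symm_measurableEquiv_toLp (Fin d)).symm).prod
    ((EuclideanSpace.volume_preserving_symm_measurableEquiv_toLp (Fin d)).symm)
  exact (h3.comp h2).comp h1

lemma normsq_split (w : EuclideanSpace ℝ (Fin d ⊕ Fin d)) :
    ‖(splitEquiv d w).1‖ ^ 2 + ‖(splitEquiv d w).2‖ ^ 2 = ‖w‖ ^ 2 := by
  simp only [normsq_eq_sum]
  rw [Fintype.sum_sum_type]
  rfl

/-- the rotation conjugated to the product space. -/
noncomputable def rotProdEquiv (d : ℕ) {c s' : ℝ} (h : c ^ 2 + s' ^ 2 = 1) :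
    (EuclideanSpace ℝ (Fin d) × EuclideanSpace ℝ (Fin d)) ≃ᵐ
      (EuclideanSpace ℝ (Fin d) × EuclideanSpace ℝ (Fin d)) :=
  ((splitEquiv d).symm.trans (rotLIE d h).toHomeomorph.toMeasurableEquiv).trans (splitEquiv d)

lemma rotProdEquiv_mp {c s' : ℝ} (h : c ^ 2 + s' ^ 2 = 1) :
    MeasurePreserving (rotProdEquiv d h) volume volume := by
  have hT : MeasurePreserving ((rotLIE d h).toHomeomorph.toMeasurableEquiv) volume volume :=
    (rotLIE d h).measurePreserving
  exact (splitEquiv_mp.comp hT).comp splitEquiv_mp.symm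

lemma rotProdEquiv_fst {c s' : ℝ} (h : c ^ 2 + s' ^ 2 = 1)
    (p : EuclideanSpace ℝ (Fin d) × EuclideanSpace ℝ (Fin d)) (i : Fin d) :
    (rotProdEquiv d h p).1 i = c * p.1 i + s' * p.2 i := rfl

lemma rotProdEquiv_snd {c s' : ℝ} (h : c ^ 2 + s' ^ 2 = 1)
    (p : EuclideanSpace ℝ (Fin d) × EuclideanSpace ℝ (Fin d)) (i : Fin d) :
    (rotProdEquiv d h p).2 i = s' * p.1 i - c * p.2 i := rfl

lemma rotProdEquiv_normsq {c s' : ℝ} (h : c ^ 2 + s' ^ 2 = 1)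
    (p : EuclideanSpace ℝ (Fin d) × EuclideanSpace ℝ (Fin d)) :
    ‖(rotProdEquiv d h p).1‖ ^ 2 + ‖(rotProdEquiv d h p).2‖ ^ 2
      = ‖p.1‖ ^ 2 + ‖p.2‖ ^ 2 := by
  have h1 := normsq_split
    ((rotLIE d h).toHomeomorph.toMeasurableEquiv ((splitEquiv d).symm p))
  have h2 := normsq_split ((splitEquiv d).symm p)
  have h3 : ‖(rotLIE d h).toHomeomorph.toMeasurableEquiv ((splitEquiv d).symm p)‖
      = ‖(splitEquiv d).symm p‖ := (rotLIE d h).norm_map _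
  have h4 : splitEquiv d ((splitEquiv d).symm p) = p :=
    (splitEquiv d).apply_symm_apply p
  rw [h4] at h2
  calc ‖(rotProdEquiv d h p).1‖ ^ 2 + ‖(rotProdEquiv d h p).2‖ ^ 2
      = ‖(rotLIE d h).toHomeomorph.toMeasurableEquiv ((splitEquiv d).symm p)‖ ^ 2 := h1
    _ = ‖(splitEquiv d).symm p‖ ^ 2 := by rw [h3]
    _ = ‖p.1‖ ^ 2 + ‖p.2‖ ^ 2 := h2.symm

/-- negation in the second variable. -/
noncomputable def negSndEquiv (d : ℕ) :
    (EuclideanSpace ℝ (Fin d) × EuclideanSpace ℝ (Fin d)) ≃ᵐ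
      (EuclideanSpace ℝ (Fin d) × EuclideanSpace ℝ (Fin d)) :=
  (MeasurableEquiv.refl (EuclideanSpace ℝ (Fin d))).prodCongr
    (Homeomorph.neg (EuclideanSpace ℝ (Fin d))).toMeasurableEquiv

lemma negSndEquiv_mp : MeasurePreserving (negSndEquiv d) volume volume := by
  rw [show (volume : Measure (EuclideanSpace ℝ (Fin d) × EuclideanSpace ℝ (Fin d)))
    = (volume : Measure (EuclideanSpace ℝ (Fin d))).prod volume from rfl]
  exact (MeasurePreserving.id volume).prod (Measure.measurePreserving_neg volume)

lemma negSndEquiv_apply (p : EuclideanSpace ℝ (Fin d) × EuclideanSpace ℝ (Fin d)) :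
    negSndEquiv d p = (p.1, -p.2) := rfl

/-! ### differentiability facts -/

variable {f : EuclideanSpace ℝ (Fin d) → ℝ} {L : ℝ}

lemma LSmooth.hasFDerivAt (hf : LSmooth f L) (y : EuclideanSpace ℝ (Fin d)) :
    HasFDerivAt f (InnerProductSpace.toDual ℝ _ (gradient f y)) y := by
  refine HasFDerivAt.of_isLittleO (Asymptotics.isLittleO_iff.2 fun ε hε => ?_)
  have hrpos : (0:ℝ) < 2 * ε / (max L 0 + 1) := by positivity
  filter_upwards [Metric.ball_mem_nhds y hrpos] with z hz
  rw [Metric.mem_ball, dist_eq_norm] at hz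
  have hb := hf y z
  rw [InnerProductSpace.toDual_apply_apply]
  rw [Real.norm_eq_abs]
  have hM : L ≤ max L 0 := le_max_left _ _
  have hM0 : (0:ℝ) ≤ max L 0 := le_max_right _ _
  have hn : (0:ℝ) ≤ ‖z - y‖ := norm_nonneg _
  have h1 : |f z - f y - inner ℝ (gradient f y) (z - y)| ≤ max L 0 / 2 * ‖z - y‖ ^ 2 := by
    refine le_trans hb ?_
    nlinarith [sq_nonneg ‖z - y‖]
  refine le_trans h1 ?_
  have h2 : max L 0 / 2 * ‖z - y‖ ≤ ε := by
    calc max L 0 / 2 * ‖z - y‖ ≤ max L 0 / 2 * (2 * ε / (max L 0 + 1)) := by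
          exact mul_le_mul_of_nonneg_left hz.le (by positivity)
      _ = max L 0 / (max L 0 + 1) * ε := by ring
      _ ≤ 1 * ε := by
          refine mul_le_mul_of_nonneg_right ?_ hε.le
          exact div_le_one_of_le₀ (by linarith) (by linarith)
      _ = ε := one_mul ε
  nlinarith

lemma LSmooth.continuous (hf : LSmooth f L) : Continuous f :=
  continuous_iff_continuousAt.2 fun y => (hf.hasFDerivAt y).continuousAt

lemma LSmooth.measurable_gradient (_hf : LSmooth f L) : Measurable (gradient f) :=
  ((InnerProductSpace.toDual ℝ
    (EuclideanSpace ℝ (Fin d))).symm.continuous.measurable).comp (measurable_fderiv ℝ f)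

end GsmoothAux

/-- if `f` is L-smooth then `|f_τ(x) − f_σ(x)| ≤ (L d / 4)(τ² − σ²)`
for `0 ≤ σ ≤ τ`. -/
theorem gsmooth_diff_bound {d : ℕ} (f : EuclideanSpace ℝ (Fin d) → ℝ) (L : ℝ)
    (hf : LSmooth f L)
    (hint : ∀ σ : ℝ, ∀ x, Integrable
      (fun u : EuclideanSpace ℝ (Fin d) => f (x + σ • u) * Real.exp (-‖u‖ ^ 2))) :
    ∀ σ τ : ℝ, 0 ≤ σ → σ ≤ τ → ∀ x,
      |gsmooth f τ x - gsmooth f σ x| ≤ L * d / 4 * (τ ^ 2 - σ ^ 2) := by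
  intro σ τ hσ hστ x
  have hτ0 : 0 ≤ τ := hσ.trans hστ
  rcases eq_or_lt_of_le hτ0 with hτ | hτpos
  · have hσ0 : σ = 0 := le_antisymm (hστ.trans hτ.ge) hσ
    rw [hσ0, ← hτ]
    simp
  · -- main case: τ > 0
    have hτne : τ ≠ 0 := ne_of_gt hτpos
    set s : ℝ := Real.sqrt (τ ^ 2 - σ ^ 2) with hs_def
    have hs2 : s ^ 2 = τ ^ 2 - σ ^ 2 := Real.sq_sqrt (by nlinarith)
    have hcs : (σ / τ) ^ 2 + (s / τ) ^ 2 = 1 := by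
      field_simp
      linarith [hs2]
    have key1 : σ * (σ / τ) + s * (s / τ) = τ := by
      field_simp
      linarith [hs2]
    have key2 : σ * (s / τ) - s * (σ / τ) = 0 := by ring
    set P : ℝ := π ^ ((d : ℝ) / 2) with hP
    have hPpos : 0 < P := Real.rpow_pos_of_pos pi_pos _
    have hgaussP : ∫ v : EuclideanSpace ℝ (Fin d), rexp (-‖v‖ ^ 2) = P := by
      rw [hP]
      simpa using integral_gauss (ι := Fin d)
    set Φ := rotProdEquiv d hcs with hΦdef
    have hΦ : MeasurePreserving Φ volume volume := rotProdEquiv_mp hcs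
    set Hτ : EuclideanSpace ℝ (Fin d) × EuclideanSpace ℝ (Fin d) → ℝ :=
      fun p => f (x + σ • p.1 + s • p.2) * rexp (-‖p.1‖ ^ 2) * rexp (-‖p.2‖ ^ 2) with hHτ
    set Hσ : EuclideanSpace ℝ (Fin d) × EuclideanSpace ℝ (Fin d) → ℝ :=
      fun p => f (x + σ • p.1) * rexp (-‖p.1‖ ^ 2) * rexp (-‖p.2‖ ^ 2) with hHσ
    set Kτ : EuclideanSpace ℝ (Fin d) × EuclideanSpace ℝ (Fin d) → ℝ :=
      fun p => f (x + τ • p.1) * rexp (-‖p.1‖ ^ 2) * rexp (-‖p.2‖ ^ 2) with hKτ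
    have hpoint : ∀ p, Hτ (Φ p) = Kτ p := by
      intro p
      have hxeq : x + σ • (Φ p).1 + s • (Φ p).2 = x + τ • p.1 := by
        ext i
        simp only [PiLp.add_apply, PiLp.smul_apply, smul_eq_mul, hΦdef,
          rotProdEquiv_fst hcs, rotProdEquiv_snd hcs]
        linear_combination p.1 i * key1 + p.2 i * key2
      have hexp : rexp (-‖(Φ p).1‖ ^ 2) * rexp (-‖(Φ p).2‖ ^ 2)
          = rexp (-‖p.1‖ ^ 2) * rexp (-‖p.2‖ ^ 2) := by
        rw [← Real.exp_add, ← Real.exp_add]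
        congr 1
        have hns := rotProdEquiv_normsq hcs p
        rw [← hΦdef] at hns
        linarith
      simp only [hHτ, hKτ]
      rw [hxeq, mul_assoc, hexp, ← mul_assoc]
    have hKτint : Integrable Kτ := by
      have h := (hint τ x).mul_prod (integrable_gauss' (ι := Fin d))
      exact h
    have hHσint : Integrable Hσ := by
      have h := (hint σ x).mul_prod (integrable_gauss' (ι := Fin d))
      exact h
    have hHτint : Integrable Hτ := by
      refine (hΦ.integrable_comp_emb Φ.measurableEmbedding (g := Hτ)).1 ?_
      have hcompeq : Hτ ∘ Φ = Kτ := funext hpoint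
      rw [hcompeq]
      exact hKτint
    have hIHτ : ∫ p, Hτ p = ∫ p, Kτ p := by
      rw [← hΦ.integral_comp Φ.measurableEmbedding Hτ]
      exact integral_congr_ae (Filter.Eventually.of_forall hpoint)
    have hIKτ : ∫ p, Kτ p
        = (∫ u : EuclideanSpace ℝ (Fin d), f (x + τ • u) * rexp (-‖u‖ ^ 2)) * P := by
      rw [hKτ, Measure.volume_eq_prod,
        MeasureTheory.integral_prod_mul (f := fun u : EuclideanSpace ℝ (Fin d) =>
          f (x + τ • u) * rexp (-‖u‖ ^ 2))
          (g := fun v : EuclideanSpace ℝ (Fin d) => rexp (-‖v‖ ^ 2)), hgaussP]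
    have hIHσ : ∫ p, Hσ p
        = (∫ u : EuclideanSpace ℝ (Fin d), f (x + σ • u) * rexp (-‖u‖ ^ 2)) * P := by
      rw [hHσ, Measure.volume_eq_prod,
        MeasureTheory.integral_prod_mul (f := fun u : EuclideanSpace ℝ (Fin d) =>
          f (x + σ • u) * rexp (-‖u‖ ^ 2))
          (g := fun v : EuclideanSpace ℝ (Fin d) => rexp (-‖v‖ ^ 2)), hgaussP]
    -- the linear and remainder terms
    set J : EuclideanSpace ℝ (Fin d) × EuclideanSpace ℝ (Fin d) → ℝ :=
      fun p => (inner ℝ (gradient f (x + σ • p.1)) (s • p.2) : ℝ)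
        * (rexp (-‖p.1‖ ^ 2) * rexp (-‖p.2‖ ^ 2)) with hJ
    set R : EuclideanSpace ℝ (Fin d) × EuclideanSpace ℝ (Fin d) → ℝ :=
      fun p => Hτ p - Hσ p - J p with hR
    have hJmeas : AEStronglyMeasurable J volume := by
      refine Measurable.aestronglyMeasurable ?_
      apply Measurable.mul
      · apply Measurable.inner
        · exact hf.measurable_gradient.comp
            ((continuous_const.fun_add (continuous_const.fun_smul continuous_fst)).measurable)
        · exact (continuous_const.fun_smul continuous_snd).measurable
      · exact ((continuous_fst.norm.pow 2).neg.rexp.mul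
          (continuous_snd.norm.pow 2).neg.rexp).measurable
    set maj : EuclideanSpace ℝ (Fin d) × EuclideanSpace ℝ (Fin d) → ℝ :=
      fun p => L / 2 * s ^ 2
        * (rexp (-‖p.1‖ ^ 2) * (‖p.2‖ ^ 2 * rexp (-‖p.2‖ ^ 2))) with hmaj
    have hmajint : Integrable maj := by
      have h := ((integrable_gauss' (ι := Fin d)).mul_prod
        (integrable_normsq_gauss (ι := Fin d))).const_mul (L / 2 * s ^ 2)
      exact h
    have hmajval : ∫ p, maj p = L / 2 * s ^ 2 * (P * (((d : ℝ) / 2) * P)) := by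
      rw [hmaj, MeasureTheory.integral_const_mul, Measure.volume_eq_prod,
        MeasureTheory.integral_prod_mul (f := fun u : EuclideanSpace ℝ (Fin d) =>
          rexp (-‖u‖ ^ 2))
          (g := fun v : EuclideanSpace ℝ (Fin d) => ‖v‖ ^ 2 * rexp (-‖v‖ ^ 2)),
        hgaussP, integral_normsq_gauss, hP]
    have hRbound : ∀ p, |R p| ≤ maj p := by
      intro p
      have hb := hf (x + σ • p.1) (x + σ • p.1 + s • p.2)
      rw [add_sub_cancel_left] at hb
      have hfact : R p = (f (x + σ • p.1 + s • p.2) - f (x + σ • p.1)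
          - (inner ℝ (gradient f (x + σ • p.1)) (s • p.2) : ℝ))
          * (rexp (-‖p.1‖ ^ 2) * rexp (-‖p.2‖ ^ 2)) := by
        simp only [hR, hHτ, hHσ, hJ]
        ring
      have hsn : ‖s • p.2‖ ^ 2 = s ^ 2 * ‖p.2‖ ^ 2 := by
        rw [norm_smul, Real.norm_eq_abs, mul_pow, sq_abs]
      have hepos : (0:ℝ) ≤ rexp (-‖p.1‖ ^ 2) * rexp (-‖p.2‖ ^ 2) := by positivity
      rw [hfact, abs_mul, abs_of_nonneg hepos]
      calc |f (x + σ • p.1 + s • p.2) - f (x + σ • p.1)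
            - (inner ℝ (gradient f (x + σ • p.1)) (s • p.2) : ℝ)|
            * (rexp (-‖p.1‖ ^ 2) * rexp (-‖p.2‖ ^ 2))
          ≤ (L / 2 * ‖s • p.2‖ ^ 2) * (rexp (-‖p.1‖ ^ 2) * rexp (-‖p.2‖ ^ 2)) :=
            mul_le_mul_of_nonneg_right hb hepos
        _ = maj p := by rw [hsn]; simp only [hmaj]; ring
    have hRint : Integrable R := by
      refine hmajint.mono' ((hHτint.aestronglyMeasurable.sub
        hHσint.aestronglyMeasurable).sub hJmeas) (Filter.Eventually.of_forall fun p => ?_)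
      rw [Real.norm_eq_abs]
      exact hRbound p
    have hJint : Integrable J := by
      have h := (hHτint.sub hHσint).sub hRint
      refine h.congr (Filter.Eventually.of_forall fun p => ?_)
      simp only [Pi.sub_apply, hR, hHτ, hHσ, hJ]
      ring
    have hJzero : ∫ p, J p = 0 := by
      have h1 : ∫ p, J (negSndEquiv d p) = ∫ p, J p :=
        negSndEquiv_mp.integral_comp (negSndEquiv d).measurableEmbedding J
      have h2 : ∀ p, J (negSndEquiv d p) = -J p := by
        intro p
        rw [negSndEquiv_apply]
        simp only [hJ, smul_neg, inner_neg_right, norm_neg]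
        ring
      rw [integral_congr_ae (Filter.Eventually.of_forall h2), integral_neg] at h1
      linarith
    have hsplit : (∫ p, Hτ p) - ∫ p, Hσ p = ∫ p, R p := by
      have heq : ∀ p, Hτ p - Hσ p = J p + R p := by
        intro p
        simp only [hR]
        ring
      rw [← integral_sub hHτint hHσint,
        integral_congr_ae (Filter.Eventually.of_forall heq),
        integral_add hJint hRint, hJzero, zero_add]
    have hRabs : |∫ p, R p| ≤ L / 2 * s ^ 2 * (P * (((d : ℝ) / 2) * P)) := by
      rw [← hmajval]
      calc |∫ p, R p| ≤ ∫ p, |R p| := by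
            simpa [Real.norm_eq_abs] using norm_integral_le_integral_norm R
        _ ≤ ∫ p, maj p := integral_mono hRint.abs hmajint hRbound
    -- final computation
    have hIdiff : ((∫ u : EuclideanSpace ℝ (Fin d), f (x + τ • u) * rexp (-‖u‖ ^ 2))
        - ∫ u : EuclideanSpace ℝ (Fin d), f (x + σ • u) * rexp (-‖u‖ ^ 2)) * P
        = ∫ p, R p := by
      rw [sub_mul, ← hIKτ, ← hIHτ, ← hIHσ]
      exact hsplit
    have hPinv : π ^ (-(d : ℝ) / 2) = P⁻¹ := by
      rw [hP, ← Real.rpow_neg pi_nonneg, neg_div]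
    have hgd : gsmooth f τ x - gsmooth f σ x
        = (((∫ u : EuclideanSpace ℝ (Fin d), f (x + τ • u) * rexp (-‖u‖ ^ 2))
          - ∫ u : EuclideanSpace ℝ (Fin d), f (x + σ • u) * rexp (-‖u‖ ^ 2)) * P)
          * (P⁻¹ * P⁻¹) := by
      unfold gsmooth
      rw [hPinv]
      field_simp
    rw [hgd, hIdiff, abs_mul]
    have hPP : |P⁻¹ * P⁻¹| = P⁻¹ * P⁻¹ := abs_of_pos (by positivity)
    rw [hPP]
    calc |∫ p, R p| * (P⁻¹ * P⁻¹)
        ≤ (L / 2 * s ^ 2 * (P * (((d : ℝ) / 2) * P))) * (P⁻¹ * P⁻¹) := by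
          refine mul_le_mul_of_nonneg_right hRabs (by positivity)
      _ = L * (d : ℝ) / 4 * s ^ 2 := by field_simp; ring
      _ = L * (d : ℝ) / 4 * (τ ^ 2 - σ ^ 2) := by rw [hs2]
end

section
/- If f : ℝ^d → ℝ is L-smooth, then for any σ ≥ 0 and any x, ‖∇f_σ(x)‖² ≤ 2‖∇f(x)‖² + (1/4) L² σ² (6+d)³. -/
open MeasureTheory Real InnerProductSpace

variable {d : ℕ}

lemma oneD0 : ∫ x : ℝ, rexp (-x^2) = √π := by
  simpa using integral_gaussian 1

lemma oneD2 : ∫ x : ℝ, x^2 * rexp (-x^2) = √π / 2 := by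
  have h := integral_comp_abs (f := fun t : ℝ => t^2 * rexp (-t^2))
  simp only [sq_abs] at h
  have h2 : ∫ x in Set.Ioi (0:ℝ), x^2 * rexp (-x^2) = (1/2) * Real.Gamma (3/2) := by
    have := integral_rpow_mul_exp_neg_rpow (p := 2) (q := 2) (by norm_num) (by norm_num)
    have e : ∀ x : ℝ, x ^ (2:ℝ) = x ^ 2 := fun x => by
      rw [show (2:ℝ) = ((2:ℕ):ℝ) by norm_num, Real.rpow_natCast]
    simp only [e] at this
    rw [this]; norm_num
  have h3 : Real.Gamma (3/2) = √π / 2 := by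
    rw [show (3/2 : ℝ) = 1/2 + 1 by norm_num, Real.Gamma_add_one (by norm_num),
      Real.Gamma_one_half_eq]
    ring
  rw [h, h2, h3]; ring

lemma auxInt0 : ∫ u : EuclideanSpace ℝ (Fin d), rexp (-‖u‖^2) = π ^ ((d:ℝ)/2) := by
  have := GaussianFourier.integral_rexp_neg_mul_sq_norm (V := EuclideanSpace ℝ (Fin d)) (b := 1) one_pos
  simpa [finrank_euclideanSpace_fin] using this

lemma auxIntegrable0 {b : ℝ} (hb : 0 < b) :
    Integrable fun u : EuclideanSpace ℝ (Fin d) => rexp (-b * ‖u‖^2) := by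
  have h := GaussianFourier.integrable_cexp_neg_mul_sq_norm_add (V := EuclideanSpace ℝ (Fin d))
    (b := (b:ℂ)) (by simpa using hb) 0 0
  have := h.norm
  refine this.congr ?_
  filter_upwards with u
  simp [Complex.norm_exp]
  left; rw [← Complex.ofReal_pow, Complex.ofReal_re]

lemma norm_le_exp_half (t : ℝ) (ht : 0 ≤ t) : t ≤ rexp (t^2/2) := by
  have h := Real.add_one_le_exp (t^2/2)
  nlinarith [sq_nonneg (t - 1)]

lemma sq_le_exp_half (t : ℝ) : t^2 ≤ 2 * rexp (t^2/2) := by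
  have h := Real.add_one_le_exp (t^2/2)
  nlinarith [Real.exp_nonneg (t^2/2)]

lemma auxIntegrable1 :
    Integrable fun u : EuclideanSpace ℝ (Fin d) => ‖u‖ * rexp (-‖u‖^2) := by
  refine (auxIntegrable0 (b := (1:ℝ)/2) (by norm_num)).mono' ?_ ?_
  · exact ((continuous_norm).mul (by continuity)).aestronglyMeasurable
  · filter_upwards with u
    rw [Real.norm_eq_abs, abs_of_nonneg (by positivity)]
    have h := norm_le_exp_half ‖u‖ (norm_nonneg u)
    calc ‖u‖ * rexp (-‖u‖^2) ≤ rexp (‖u‖^2/2) * rexp (-‖u‖^2) := by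
          apply mul_le_mul_of_nonneg_right h (Real.exp_nonneg _)
      _ = rexp (-(1/2) * ‖u‖^2) := by rw [← Real.exp_add]; ring_nf

lemma auxIntegrable2 :
    Integrable fun u : EuclideanSpace ℝ (Fin d) => ‖u‖^2 * rexp (-‖u‖^2) := by
  refine ((auxIntegrable0 (b := (1:ℝ)/2) (by norm_num)).const_mul 2).mono' ?_ ?_
  · exact ((continuous_norm.pow 2).mul (by continuity)).aestronglyMeasurable
  · filter_upwards with u
    rw [Real.norm_eq_abs, abs_of_nonneg (by positivity)]
    have h := sq_le_exp_half ‖u‖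
    calc ‖u‖^2 * rexp (-‖u‖^2) ≤ (2 * rexp (‖u‖^2/2)) * rexp (-‖u‖^2) := by
          apply mul_le_mul_of_nonneg_right h (Real.exp_nonneg _)
      _ = 2 * rexp (-(1/2) * ‖u‖^2) := by rw [mul_assoc, ← Real.exp_add]; ring_nf

lemma oneD2_integrable : Integrable fun x : ℝ => x^2 * rexp (-x^2) := by
  have := integrable_rpow_mul_exp_neg_mul_sq (b := (1:ℝ)) one_pos (s := 2) (by norm_num)
  have e : ∀ x : ℝ, x ^ (2:ℝ) = x ^ 2 := fun x => by
    rw [show (2:ℝ) = ((2:ℕ):ℝ) by norm_num, Real.rpow_natCast]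
  simpa [e] using this

lemma oneD0_integrable : Integrable fun x : ℝ => rexp (-x^2) := by
  simpa using integrable_exp_neg_mul_sq (b := (1:ℝ)) one_pos

lemma sqrt_pi_pow (d : ℕ) : (√π) ^ d = π ^ ((d:ℝ)/2) := by
  rw [Real.sqrt_eq_rpow, ← Real.rpow_natCast (π ^ ((1:ℝ)/2)) d, ← Real.rpow_mul pi_pos.le]
  norm_num; rw [mul_comm]
  norm_num [div_eq_mul_inv]

lemma auxInt2 : ∫ u : EuclideanSpace ℝ (Fin d), ‖u‖^2 * rexp (-‖u‖^2)
    = ((d:ℝ)/2) * π ^ ((d:ℝ)/2) := by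
  have hmp := (EuclideanSpace.volume_preserving_symm_measurableEquiv_toLp (Fin d)).symm
  rw [← hmp.integral_comp (MeasurableEquiv.measurableEmbedding _)]
  have hnorm : ∀ v : Fin d → ℝ,
      ‖(MeasurableEquiv.toLp 2 (Fin d → ℝ)).symm.symm v‖^2 = ∑ i, v i ^ 2 := by
    intro v
    rw [EuclideanSpace.norm_eq, Real.sq_sqrt (by positivity)]
    simp
  simp only [hnorm]
  have hterm : ∀ i : Fin d, (fun v : Fin d → ℝ => v i ^ 2 * rexp (-∑ j, v j ^ 2))
      = fun v : Fin d → ℝ => ∏ j, (if j = i then (v j)^2 else 1) * rexp (-(v j)^2) := by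
    intro i
    funext v
    rw [Finset.prod_mul_distrib, Finset.prod_ite_eq' Finset.univ i (fun j => (v j)^2)]
    simp [← Real.exp_sum]
  have hint : ∀ i : Fin d, Integrable
      (fun v : Fin d → ℝ => v i ^ 2 * rexp (-∑ j, v j ^ 2)) := by
    intro i
    rw [hterm i]
    apply Integrable.fintype_prod (f := fun j (t:ℝ) => (if j = i then t^2 else 1) * rexp (-t^2))
    intro j
    by_cases h : j = i <;> simp [h, oneD2_integrable, oneD0_integrable]
  calc ∫ v : Fin d → ℝ, (∑ i, v i ^ 2) * rexp (-∑ j, v j ^ 2)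
      = ∫ v : Fin d → ℝ, ∑ i, v i ^ 2 * rexp (-∑ j, v j ^ 2) := by
        congr 1; funext v; rw [Finset.sum_mul]
    _ = ∑ i, ∫ v : Fin d → ℝ, v i ^ 2 * rexp (-∑ j, v j ^ 2) :=
        integral_finset_sum _ (fun i _ => hint i)
    _ = ∑ i : Fin d, ((d:ℝ)/2) * π ^ ((d:ℝ)/2) / d := by
        refine Finset.sum_congr rfl (fun i _ => ?_)
        rw [hterm i, volume_pi,
          MeasureTheory.integral_fintype_prod_eq_prod (𝕜 := ℝ) (ι := Fin d)
            (f := fun j (t:ℝ) => (if j = i then t^2 else 1) * rexp (-t^2))]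
        have : ∀ j : Fin d, (∫ t : ℝ, (if j = i then t^2 else 1) * rexp (-t^2))
            = √π * (if j = i then 1/2 else 1) := by
          intro j
          by_cases h : j = i
          · simp only [h, if_true, eq_self_iff_true]
            rw [oneD2]; ring
          · simp only [if_neg h, one_mul, oneD0]; ring
        simp only [this]
        rw [Finset.prod_mul_distrib, Finset.prod_const,
          Finset.prod_ite_eq' Finset.univ i (fun _ => (1/2:ℝ))]
        simp only [Finset.mem_univ, if_pos, Finset.card_univ, Fintype.card_fin]
        rw [sqrt_pi_pow]
        have hd : (0:ℝ) < d := by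
          have : 0 < d := Fin.pos i
          exact_mod_cast this
        field_simp
    _ = ((d:ℝ)/2) * π ^ ((d:ℝ)/2) := by
        rw [Finset.sum_const, Finset.card_univ, Fintype.card_fin, nsmul_eq_mul]
        rcases Nat.eq_zero_or_pos d with h0 | h0
        · simp [h0]
        · have hd : (0:ℝ) < d := by exact_mod_cast h0
          field_simp

lemma auxInt1_le : ∫ u : EuclideanSpace ℝ (Fin d), ‖u‖ * rexp (-‖u‖^2)
    ≤ (2+(d:ℝ))/4 * π ^ ((d:ℝ)/2) := by
  have hcomb : Integrable (fun u : EuclideanSpace ℝ (Fin d) =>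
      (1/2) * rexp (-‖u‖^2) + (1/2) * (‖u‖^2 * rexp (-‖u‖^2))) := by
    refine Integrable.add ?_ ?_
    · have h0 : Integrable (fun u : EuclideanSpace ℝ (Fin d) => rexp (-‖u‖^2)) := by
        simpa using auxIntegrable0 (d := d) one_pos
      exact h0.const_mul _
    · exact auxIntegrable2.const_mul _
  have hmono : ∫ u : EuclideanSpace ℝ (Fin d), ‖u‖ * rexp (-‖u‖^2)
      ≤ ∫ u : EuclideanSpace ℝ (Fin d),
        ((1/2) * rexp (-‖u‖^2) + (1/2) * (‖u‖^2 * rexp (-‖u‖^2))) := by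
    refine integral_mono auxIntegrable1 hcomb (fun u => ?_)
    have h1 : ‖u‖ ≤ (1 + ‖u‖^2)/2 := by nlinarith [sq_nonneg (‖u‖ - 1)]
    have := mul_le_mul_of_nonneg_right h1 (Real.exp_nonneg (-‖u‖^2))
    calc ‖u‖ * rexp (-‖u‖^2) ≤ (1 + ‖u‖^2)/2 * rexp (-‖u‖^2) := this
      _ = (1/2) * rexp (-‖u‖^2) + (1/2) * (‖u‖^2 * rexp (-‖u‖^2)) := by ring
  have h0 : Integrable (fun u : EuclideanSpace ℝ (Fin d) => rexp (-‖u‖^2)) := by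
    simpa using auxIntegrable0 (d := d) one_pos
  rw [integral_add (h0.const_mul (1/2:ℝ))
      (auxIntegrable2.const_mul _), integral_const_mul, integral_const_mul] at hmono
  rw [show ∫ u : EuclideanSpace ℝ (Fin d), rexp (-‖u‖^2) = π ^ ((d:ℝ)/2) from auxInt0,
    auxInt2] at hmono
  calc ∫ u : EuclideanSpace ℝ (Fin d), ‖u‖ * rexp (-‖u‖^2)
      ≤ 1/2 * π ^ ((d:ℝ)/2) + 1/2 * ((d:ℝ)/2 * π ^ ((d:ℝ)/2)) := hmono
    _ = (2+(d:ℝ))/4 * π ^ ((d:ℝ)/2) := by ring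

lemma lsmooth_nonneg {f : EuclideanSpace ℝ (Fin d) → ℝ} {L : ℝ}
    (hd : 0 < d) (hf : LSmooth f L) : 0 ≤ L := by
  set e : EuclideanSpace ℝ (Fin d) := EuclideanSpace.single ⟨0, hd⟩ 1 with he
  have hne : ‖e - 0‖ = 1 := by
    rw [sub_zero, he, EuclideanSpace.norm_single]; norm_num
  have := hf 0 e
  rw [hne] at this
  have h0 := abs_nonneg (f e - f 0 - inner ℝ (gradient f 0) (e - 0) : ℝ)
  nlinarith

lemma lsmooth_hasGradientAt {f : EuclideanSpace ℝ (Fin d) → ℝ} {L : ℝ}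
    (hL : 0 ≤ L) (hf : LSmooth f L) (x : EuclideanSpace ℝ (Fin d)) :
    HasGradientAt f (gradient f x) x := by
  rw [hasGradientAt_iff_isLittleO, Asymptotics.isLittleO_iff]
  intro c hc
  rw [Metric.eventually_nhds_iff]
  refine ⟨c / (L/2 + 1), by positivity, fun y hy => ?_⟩
  rw [dist_eq_norm] at hy
  have h := hf x y
  rw [Real.norm_eq_abs]
  calc |f y - f x - inner ℝ (gradient f x) (y - x)| ≤ L/2 * ‖y - x‖^2 := h
    _ ≤ (L/2 + 1) * (c / (L/2 + 1)) * ‖y - x‖ := by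
        rw [pow_two]
        have h1 : (L/2) * ‖y-x‖ ≤ (L/2 + 1) * (c / (L/2 + 1)) := by
          have : (L/2) * ‖y-x‖ ≤ (L/2+1) * ‖y-x‖ := by nlinarith [norm_nonneg (y-x)]
          refine this.trans ?_
          exact mul_le_mul_of_nonneg_left hy.le (by positivity)
        nlinarith [norm_nonneg (y-x)]
    _ = c * ‖y - x‖ := by
        rw [mul_div_assoc']
        rw [mul_comm (L/2+1) c, mul_div_assoc, div_self (by positivity), mul_one]
    _ ≤ c * ‖y - x‖ := le_refl _

set_option maxHeartbeats 1000000 in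
lemma lsmooth_grad_lip {f : EuclideanSpace ℝ (Fin d) → ℝ} {L : ℝ}
    (hL : 0 ≤ L) (hf : LSmooth f L) (x y : EuclideanSpace ℝ (Fin d)) :
    ‖gradient f y - gradient f x‖ ≤ 3 * L * ‖y - x‖ := by
  set gx := gradient f x with hgx
  set gy := gradient f y with hgy
  by_cases hv : gy - gx = 0
  · rw [hv, norm_zero]; positivity
  rcases eq_or_ne y x with rfl | hyx
  · exact absurd (by rw [sub_self]) hv
  set v := gy - gx with hvdef
  set r := ‖y - x‖ with hr
  have hrpos : 0 < r := by rw [hr]; exact norm_sub_pos_iff.mpr hyx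
  have hvpos : 0 < ‖v‖ := norm_pos_iff.mpr hv
  set c : ℝ := r / ‖v‖ with hc
  have hcpos : 0 < c := by positivity
  set z := y - c • v with hz
  have hyz : y - z = c • v := by rw [hz]; abel
  have hzy : z - y = -(c • v) := by rw [hz]; abel
  have hnzy : ‖z - y‖ = r := by
    rw [hzy, norm_neg, norm_smul, Real.norm_eq_abs, abs_of_pos hcpos, hc,
      div_mul_cancel₀ _ (ne_of_gt hvpos)]
  have hnzx : ‖z - x‖ ≤ 2 * r := by
    have : z - x = (y - x) - c • v := by rw [hz]; abel
    rw [this]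
    refine (norm_sub_le _ _).trans ?_
    rw [norm_smul, Real.norm_eq_abs, abs_of_pos hcpos, hc,
      div_mul_cancel₀ _ (ne_of_gt hvpos)]
    linarith
  have hinner : (inner ℝ v (y - z) : ℝ) = r * ‖v‖ := by
    rw [hyz, real_inner_smul_right, real_inner_self_eq_norm_mul_norm, hc]
    field_simp
  have h1 := abs_le.mp (hf x z)
  have h2 := abs_le.mp (hf y z)
  have h3 := abs_le.mp (hf x y)
  rw [hnzy] at h2
  have hzx2 : L/2 * ‖z - x‖^2 ≤ 2 * L * r^2 := by
    have hsq : ‖z - x‖^2 ≤ (2*r)^2 := by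
      have := pow_le_pow_left₀ (norm_nonneg (z - x)) hnzx 2
      simpa using this
    nlinarith
  have hsplit : (inner ℝ v (y - z) : ℝ) = - (inner ℝ gy (z - y) : ℝ)
      - (inner ℝ gx (y - x) : ℝ) + (inner ℝ gx (z - x) : ℝ) := by
    rw [hvdef, inner_sub_left]
    have e1 : (inner ℝ gy (y - z) : ℝ) = - (inner ℝ gy (z - y) : ℝ) := by
      rw [show y - z = -(z - y) by abel, inner_neg_right]
    have e2 : (inner ℝ gx (y - z) : ℝ)
        = (inner ℝ gx (y - x) : ℝ) - (inner ℝ gx (z - x) : ℝ) := by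
      rw [show y - z = (y - x) - (z - x) by abel, inner_sub_right]
    rw [e1, e2]
    ring
  have key : r * ‖v‖ ≤ 3 * L * r^2 := by
    rw [← hinner, hsplit]
    linarith [h2.1, h3.1, le_trans h1.2 hzx2]
  have : r * ‖v‖ ≤ r * (3 * L * r) := by rw [hr] at key ⊢; nlinarith [key]
  have hfin := le_of_mul_le_mul_left this hrpos
  calc ‖v‖ ≤ 3 * L * r := hfin
    _ = 3 * L * ‖y - x‖ := by rw [hr]


set_option maxHeartbeats 2000000 in
/-- if `f` is L-smooth then
`‖∇f_σ(x)‖² ≤ 2‖∇f(x)‖² + (1/4) L² σ² (6+d)³` for any `σ ≥ 0`. -/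
theorem gsmooth_grad_sq_bound {d : ℕ} (f : EuclideanSpace ℝ (Fin d) → ℝ) (L : ℝ)
    (hf : LSmooth f L) :
    ∀ σ : ℝ, 0 ≤ σ → ∀ x,
      ‖gradient (gsmooth f σ) x‖ ^ 2 ≤
        2 * ‖gradient f x‖ ^ 2 + 1 / 4 * L ^ 2 * σ ^ 2 * (6 + (d : ℝ)) ^ 3 := by
  intro σ hσ x₀
  rcases Nat.eq_zero_or_pos d with hd0 | hd
  · subst hd0
    haveI : Subsingleton (EuclideanSpace ℝ (Fin 0)) :=
      ⟨fun a b => by ext i; exact Fin.elim0 i⟩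
    have h1 : gradient (gsmooth f σ) x₀ = 0 := Subsingleton.elim _ _
    have h2 : gradient f x₀ = 0 := Subsingleton.elim _ _
    rw [h1, h2, norm_zero]
    norm_num
    positivity
  have hL : 0 ≤ L := lsmooth_nonneg hd hf
  have hgrad : ∀ y, HasGradientAt f (gradient f y) y := lsmooth_hasGradientAt hL hf
  have hdiff : Differentiable ℝ f := fun y => (hgrad y).differentiableAt
  have hcontf : Continuous f := hdiff.continuous
  have hlip := lsmooth_grad_lip hL hf
  have hcontg : Continuous (fun y : EuclideanSpace ℝ (Fin d) => gradient f y) := by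
    refine (LipschitzWith.of_dist_le_mul (K := (3*L).toNNReal) (fun a b => ?_)).continuous
    rw [dist_eq_norm, dist_eq_norm, Real.coe_toNNReal _ (by positivity)]
    exact hlip b a
  have hexp_cont : Continuous (fun u : EuclideanSpace ℝ (Fin d) => rexp (-‖u‖^2)) :=
    Real.continuous_exp.comp (continuous_norm.pow 2).neg
  have haff : Continuous (fun u : EuclideanSpace ℝ (Fin d) => x₀ + σ • u) :=
    continuous_const.add (continuous_id.const_smul σ)
  -- derivative of the integrand in x
  have hDz : ∀ (w u : EuclideanSpace ℝ (Fin d)),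
      HasFDerivAt (fun x => f (x + σ • u))
        ((toDual ℝ (EuclideanSpace ℝ (Fin d))) (gradient f (w + σ • u))) w := by
    intro w u
    have h := hasGradientAt_iff_hasFDerivAt.mp (hgrad (w + σ • u))
    have ht : HasFDerivAt (fun x : EuclideanSpace ℝ (Fin d) => x + σ • u)
        (ContinuousLinearMap.id ℝ (EuclideanSpace ℝ (Fin d))) w :=
      (hasFDerivAt_id w).add_const (σ • u)
    have := h.comp w ht
    rw [ContinuousLinearMap.comp_id] at this
    exact this
  have hD : ∀ (w u : EuclideanSpace ℝ (Fin d)),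
      HasFDerivAt (fun x => f (x + σ • u) * rexp (-‖u‖^2))
        (rexp (-‖u‖^2) • ((toDual ℝ (EuclideanSpace ℝ (Fin d)))
          (gradient f (w + σ • u)))) w :=
    fun w u => (hDz w u).mul_const (rexp (-‖u‖^2))
  have hnormD : ∀ (w u : EuclideanSpace ℝ (Fin d)),
      ‖rexp (-‖u‖^2) • ((toDual ℝ (EuclideanSpace ℝ (Fin d))) (gradient f (w + σ • u)))‖
        = rexp (-‖u‖^2) * ‖gradient f (w + σ • u)‖ := by
    intro w u
    rw [norm_smul, Real.norm_eq_abs, abs_of_pos (Real.exp_pos _),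
      LinearIsometryEquiv.norm_map]
  have hgbound : ∀ z, ‖gradient f z‖ ≤ ‖gradient f x₀‖ + 3*L*‖z - x₀‖ := by
    intro z
    have h1 := hlip x₀ z
    have htri := norm_sub_norm_le (gradient f z) (gradient f x₀)
    linarith
  have h0 : Integrable (fun u : EuclideanSpace ℝ (Fin d) => rexp (-‖u‖^2)) := by
    simpa using auxIntegrable0 (d := d) one_pos
  have hmeasF : ∀ x : EuclideanSpace ℝ (Fin d), AEStronglyMeasurable
      (fun u : EuclideanSpace ℝ (Fin d) => f (x + σ • u) * rexp (-‖u‖^2)) volume := by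
    intro x
    exact ((hcontf.comp (continuous_const.add (continuous_id.const_smul σ))).mul
      hexp_cont).aestronglyMeasurable
  -- the dominated-derivative theorem
  obtain ⟨hF'int, hFD⟩ := hasFDerivAt_integral_of_dominated_loc_of_lip'
    (μ := (volume : Measure (EuclideanSpace ℝ (Fin d))))
    (F := fun x u => f (x + σ • u) * rexp (-‖u‖^2))
    (F' := fun u => rexp (-‖u‖^2) • ((toDual ℝ (EuclideanSpace ℝ (Fin d)))
      (gradient f (x₀ + σ • u))))
    (x₀ := x₀)
    (bound := fun u => (‖gradient f x₀‖ + 3*L*(1 + σ*‖u‖)) * rexp (-‖u‖^2))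
    (s := Metric.ball x₀ 1) (Metric.ball_mem_nhds x₀ one_pos)
    (fun x _ => hmeasF x)
    (by -- hF_int
      refine Integrable.mono' (g := fun u : EuclideanSpace ℝ (Fin d) =>
        (|f x₀| + ‖gradient f x₀‖*σ*‖u‖ + L/2*σ^2*‖u‖^2) * rexp (-‖u‖^2)) ?_ (hmeasF x₀) ?_
      · have : (fun u : EuclideanSpace ℝ (Fin d) =>
            (|f x₀| + ‖gradient f x₀‖*σ*‖u‖ + L/2*σ^2*‖u‖^2) * rexp (-‖u‖^2))
            = fun u : EuclideanSpace ℝ (Fin d) => |f x₀| * rexp (-‖u‖^2)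
              + (‖gradient f x₀‖*σ) * (‖u‖ * rexp (-‖u‖^2))
              + (L/2*σ^2) * (‖u‖^2 * rexp (-‖u‖^2)) := by
          funext u; ring
        rw [this]
        exact ((h0.const_mul _).add (auxIntegrable1.const_mul _)).add
          (auxIntegrable2.const_mul _)
      · filter_upwards with u
        rw [Real.norm_eq_abs, abs_mul, abs_of_pos (Real.exp_pos _)]
        refine mul_le_mul_of_nonneg_right ?_ (Real.exp_nonneg _)
        have h3 : ‖σ • u‖^2 = σ^2 * ‖u‖^2 := by
          rw [norm_smul, Real.norm_eq_abs, abs_of_nonneg hσ, mul_pow]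
        have h1 := abs_le.mp (hf x₀ (x₀ + σ • u))
        rw [add_sub_cancel_left, h3] at h1
        have hsn : ‖σ • u‖ = σ * ‖u‖ := by
          rw [norm_smul, Real.norm_eq_abs, abs_of_nonneg hσ]
        have h2 := abs_le.mp ((abs_real_inner_le_norm (gradient f x₀) (σ • u)).trans_eq
          (by rw [hsn]; try ring))
        have e1 := le_abs_self (f x₀)
        have e2 := neg_abs_le (f x₀)
        refine abs_le.mpr ⟨?_, ?_⟩
        · nlinarith [h1.1, h2.1]
        · nlinarith [h1.2, h2.2]
    )
    (by -- hF'_meas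
      refine Continuous.aestronglyMeasurable (hexp_cont.smul ?_)
      have : Continuous (fun u : EuclideanSpace ℝ (Fin d) => gradient f (x₀ + σ • u)) :=
        hcontg.comp haff
      exact (toDual ℝ (EuclideanSpace ℝ (Fin d))).continuous.comp this)
    (by -- h_lipsch
      filter_upwards with u
      intro x hx
      refine Convex.norm_image_sub_le_of_norm_hasFDerivWithin_le
        (f' := fun w => rexp (-‖u‖^2) • ((toDual ℝ (EuclideanSpace ℝ (Fin d)))
          (gradient f (w + σ • u))))
        (fun w _ => (hD w u).hasFDerivWithinAt) (fun w hw => ?_) (convex_ball x₀ 1)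
        (Metric.mem_ball_self one_pos) hx
      rw [hnormD]
      rw [mul_comm ((‖gradient f x₀‖ + 3*L*(1 + σ*‖u‖))) (rexp (-‖u‖^2))]
      refine mul_le_mul_of_nonneg_left ?_ (Real.exp_nonneg _)
      refine (hgbound _).trans ?_
      have hwx : ‖w + σ • u - x₀‖ ≤ 1 + σ * ‖u‖ := by
        have he : w + σ • u - x₀ = (w - x₀) + σ • u := by abel
        rw [he]
        refine (norm_add_le _ _).trans ?_
        have hw1 : ‖w - x₀‖ ≤ 1 := by
          have := mem_ball_iff_norm.mp hw
          linarith
        rw [norm_smul, Real.norm_eq_abs, abs_of_nonneg hσ]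
        linarith
      have : 3*L*‖w + σ • u - x₀‖ ≤ 3*L*(1 + σ*‖u‖) :=
        mul_le_mul_of_nonneg_left hwx (by positivity)
      linarith)
    (by -- bound_integrable
      have : (fun u : EuclideanSpace ℝ (Fin d) =>
          (‖gradient f x₀‖ + 3*L*(1 + σ*‖u‖)) * rexp (-‖u‖^2))
          = fun u : EuclideanSpace ℝ (Fin d) => (‖gradient f x₀‖ + 3*L) * rexp (-‖u‖^2)
            + (3*L*σ) * (‖u‖ * rexp (-‖u‖^2)) := by
        funext u; ring
      rw [this]
      exact (h0.const_mul _).add (auxIntegrable1.const_mul _))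
    (by -- h_diff
      filter_upwards with u
      exact hD x₀ u)
  -- identify the gradient of gsmooth
  have hC : (0:ℝ) < π ^ (-(d:ℝ)/2) := Real.rpow_pos_of_pos pi_pos _
  have hCpi : π ^ (-(d:ℝ)/2) * π ^ ((d:ℝ)/2) = 1 := by
    rw [← Real.rpow_add pi_pos, show -(d:ℝ)/2 + (d:ℝ)/2 = 0 by ring, Real.rpow_zero]
  have hFD' : HasFDerivAt (gsmooth f σ)
      ((π ^ (-(d:ℝ)/2)) • ∫ u, rexp (-‖u‖^2) •
        ((toDual ℝ (EuclideanSpace ℝ (Fin d))) (gradient f (x₀ + σ • u)))) x₀ := by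
    have := hFD.const_mul (π ^ (-(d:ℝ)/2))
    exact this
  set I : EuclideanSpace ℝ (Fin d) :=
    ∫ u, rexp (-‖u‖^2) • gradient f (x₀ + σ • u) with hI
  have hdual : (∫ u, rexp (-‖u‖^2) •
      ((toDual ℝ (EuclideanSpace ℝ (Fin d))) (gradient f (x₀ + σ • u))))
      = (toDual ℝ (EuclideanSpace ℝ (Fin d))) I := by
    have heq : ∀ u : EuclideanSpace ℝ (Fin d), rexp (-‖u‖^2) •
        ((toDual ℝ (EuclideanSpace ℝ (Fin d))) (gradient f (x₀ + σ • u)))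
        = (toDual ℝ (EuclideanSpace ℝ (Fin d))).toLinearIsometry
          (rexp (-‖u‖^2) • gradient f (x₀ + σ • u)) := by
      intro u
      rw [LinearIsometryEquiv.coe_toLinearIsometry, _root_.map_smul]
    simp_rw [heq]
    rw [LinearIsometry.integral_comp_comm]
    rfl
  have hgradEq : gradient (gsmooth f σ) x₀ = (π ^ (-(d:ℝ)/2)) • I := by
    have hfd : fderiv ℝ (gsmooth f σ) x₀
        = (π ^ (-(d:ℝ)/2)) • ((toDual ℝ (EuclideanSpace ℝ (Fin d))) I) := by
      rw [hFD'.fderiv, hdual]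
    show (toDual ℝ (EuclideanSpace ℝ (Fin d))).symm (fderiv ℝ (gsmooth f σ) x₀) = _
    rw [hfd, _root_.map_smul, LinearIsometryEquiv.symm_apply_apply]
  -- integrability of the vector-valued integrand
  have hIint : Integrable (fun u : EuclideanSpace ℝ (Fin d) =>
      rexp (-‖u‖^2) • gradient f (x₀ + σ • u)) := by
    refine Integrable.mono' (g := fun u : EuclideanSpace ℝ (Fin d) =>
      (‖gradient f x₀‖) * rexp (-‖u‖^2) + (3*L*σ) * (‖u‖ * rexp (-‖u‖^2))) ?_ ?_ ?_
    · exact (h0.const_mul _).add (auxIntegrable1.const_mul _)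
    · exact (hexp_cont.smul (hcontg.comp haff)).aestronglyMeasurable
    · filter_upwards with u
      rw [norm_smul, Real.norm_eq_abs, abs_of_pos (Real.exp_pos _)]
      have hb := hgbound (x₀ + σ • u)
      rw [add_sub_cancel_left] at hb
      have hsn : ‖σ • u‖ = σ * ‖u‖ := by
        rw [norm_smul, Real.norm_eq_abs, abs_of_nonneg hσ]
      rw [hsn] at hb
      have := mul_le_mul_of_nonneg_left hb (Real.exp_nonneg (-‖u‖^2))
      calc rexp (-‖u‖^2) * ‖gradient f (x₀ + σ • u)‖
          ≤ rexp (-‖u‖^2) * (‖gradient f x₀‖ + 3*L*(σ*‖u‖)) := this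
        _ = ‖gradient f x₀‖ * rexp (-‖u‖^2) + (3*L*σ) * (‖u‖ * rexp (-‖u‖^2)) := by ring
  -- the deviation bound
  have hsub : I - (π ^ ((d:ℝ)/2)) • gradient f x₀
      = ∫ u, rexp (-‖u‖^2) • (gradient f (x₀ + σ • u) - gradient f x₀) := by
    have h1 : (fun u : EuclideanSpace ℝ (Fin d) =>
        rexp (-‖u‖^2) • (gradient f (x₀ + σ • u) - gradient f x₀))
        = fun u : EuclideanSpace ℝ (Fin d) =>
          rexp (-‖u‖^2) • gradient f (x₀ + σ • u)
            - rexp (-‖u‖^2) • gradient f x₀ := by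
      funext u; rw [smul_sub]
    rw [h1, integral_sub hIint (h0.smul_const _), integral_smul_const, auxInt0]
  have hnormsub : ‖I - (π ^ ((d:ℝ)/2)) • gradient f x₀‖
      ≤ 3*L*σ*((2+(d:ℝ))/4 * π ^ ((d:ℝ)/2)) := by
    rw [hsub]
    have hstep : ‖∫ u, rexp (-‖u‖^2) • (gradient f (x₀ + σ • u) - gradient f x₀)‖
        ≤ ∫ u : EuclideanSpace ℝ (Fin d), (3*L*σ) * (‖u‖ * rexp (-‖u‖^2)) := by
      refine norm_integral_le_of_norm_le (auxIntegrable1.const_mul _) ?_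
      filter_upwards with u
      rw [norm_smul, Real.norm_eq_abs, abs_of_pos (Real.exp_pos _)]
      have hb := hlip x₀ (x₀ + σ • u)
      rw [add_sub_cancel_left] at hb
      have hsn : ‖σ • u‖ = σ * ‖u‖ := by
        rw [norm_smul, Real.norm_eq_abs, abs_of_nonneg hσ]
      rw [hsn] at hb
      have := mul_le_mul_of_nonneg_left hb (Real.exp_nonneg (-‖u‖^2))
      calc rexp (-‖u‖^2) * ‖gradient f (x₀ + σ • u) - gradient f x₀‖
          ≤ rexp (-‖u‖^2) * (3*L*(σ*‖u‖)) := this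
        _ = (3*L*σ) * (‖u‖ * rexp (-‖u‖^2)) := by ring
    refine hstep.trans ?_
    rw [integral_const_mul]
    exact mul_le_mul_of_nonneg_left auxInt1_le (by positivity)
  -- conclude
  have hG : ‖gradient (gsmooth f σ) x₀‖ ≤ ‖gradient f x₀‖ + 3*L*σ*((2+(d:ℝ))/4) := by
    rw [hgradEq]
    have hdecomp : (π ^ (-(d:ℝ)/2)) • I = gradient f x₀
        + (π ^ (-(d:ℝ)/2)) • (I - (π ^ ((d:ℝ)/2)) • gradient f x₀) := by
      rw [smul_sub, smul_smul, hCpi, one_smul]; abel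
    rw [hdecomp]
    refine (norm_add_le _ _).trans ?_
    rw [norm_smul, Real.norm_eq_abs, abs_of_pos hC]
    have hm := mul_le_mul_of_nonneg_left hnormsub (le_of_lt hC)
    have heq2 : π ^ (-(d:ℝ)/2) * (3*L*σ*((2+(d:ℝ))/4 * π ^ ((d:ℝ)/2)))
        = 3*L*σ*((2+(d:ℝ))/4) := by
      have hr : π ^ (-(d:ℝ)/2) * (3*L*σ*((2+(d:ℝ))/4 * π ^ ((d:ℝ)/2)))
          = (3*L*σ*((2+(d:ℝ))/4)) * (π ^ (-(d:ℝ)/2) * π ^ ((d:ℝ)/2)) := by ring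
      rw [hr, hCpi, mul_one]
    linarith
  have hdnn : (0:ℝ) ≤ d := Nat.cast_nonneg d
  have hpoly : 9*(2+(d:ℝ))^2 ≤ 2*(6+(d:ℝ))^3 := by nlinarith [sq_nonneg (2+(d:ℝ))]
  have hb_nn : 0 ≤ 3*L*σ*((2+(d:ℝ))/4) := by positivity
  have h2 : ‖gradient (gsmooth f σ) x₀‖^2
      ≤ (‖gradient f x₀‖ + 3*L*σ*((2+(d:ℝ))/4))^2 :=
    pow_le_pow_left₀ (norm_nonneg _) hG 2
  have hLs : (0:ℝ) ≤ L^2*σ^2 := by positivity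
  have hkey : 2*(3*L*σ*((2+(d:ℝ))/4))^2 ≤ 1/4*L^2*σ^2*(6+(d:ℝ))^3 := by
    nlinarith [mul_le_mul_of_nonneg_right hpoly hLs]
  nlinarith [sq_nonneg (‖gradient f x₀‖ - 3*L*σ*((2+(d:ℝ))/4)), h2, hkey,
    norm_nonneg (gradient f x₀)]
end
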